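/- A bounded linear operator T on l_p(ℕ, ℝ) is time-invariant (commutes with the shift: Λ T = T Λ) if and only if it is a convolution operator: there exists a sequence (T(k))_{k∈ℕ} (its impulse response, T(k) = (T δ₀)(k) where δ₀ is the unit impulse) such that (Tu)(n) = Σ_{k=0}^{n} T(k) u(n−k) for all finitely supported u, provided T is also causal. -/
import Mathlib


/-- Causal operator: output at time `n` depends only on inputs up to time `n`. -/
def Causal (T : (ℕ → ℝ) →ₗ[ℝ] (ℕ → ℝ)) : Prop :=
  ∀ u v : ℕ → ℝ, ∀ n : ℕ, (∀ j ≤ n, u j = v j) → T u n = T v n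

/-- The unilateral shift (delay) operator `Λ`. -/
def shiftL : (ℕ → ℝ) →ₗ[ℝ] (ℕ → ℝ) where
  toFun g n := match n with
    | 0 => 0
    | (k+1) => g k
  map_add' g h := by funext n; cases n <;> simp
  map_smul' c g := by funext n; cases n <;> simp

/-- The unit impulse `δ₀ = (1, 0, 0, …)`. -/
def delta0 : ℕ → ℝ := fun k => if k = 0 then 1 else 0

def eSeq (j : ℕ) : ℕ → ℝ := fun n => if n = j then 1 else 0

lemma shift_eSeq (j : ℕ) : shiftL (eSeq j) = eSeq (j + 1) := by
  funext n
  cases n with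
  | zero => simp [shiftL, eSeq]
  | succ k => simp [shiftL, eSeq]

lemma eSeq_zero : eSeq 0 = delta0 := by
  funext n; simp [eSeq, delta0]

lemma T_eSeq (T : (ℕ → ℝ) →ₗ[ℝ] (ℕ → ℝ))
    (h : shiftL ∘ₗ T = T ∘ₗ shiftL) (j n : ℕ) :
    T (eSeq j) n = if j ≤ n then T delta0 (n - j) else 0 := by
  induction j generalizing n with
  | zero => simp [eSeq_zero]
  | succ j ih =>
    have hc : T (shiftL (eSeq j)) = shiftL (T (eSeq j)) := by
      have := congrArg (fun S => (S : (ℕ → ℝ) →ₗ[ℝ] (ℕ → ℝ)) (eSeq j)) h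
      simpa using this.symm
    rw [← shift_eSeq, hc]
    cases n with
    | zero => simp [shiftL]
    | succ m =>
      show T (eSeq j) m = _
      rw [ih m]
      by_cases hjm : j ≤ m
      · simp [hjm, Nat.succ_le_succ hjm, Nat.succ_sub_succ]
      · simp [hjm, fun h' => hjm (Nat.succ_le_succ_iff.mp h')]

lemma decomp (u : ℕ → ℝ) (N : ℕ) (hu : ∀ n ≥ N, u n = 0) :
    u = ∑ j ∈ Finset.range N, u j • eSeq j := by
  funext n
  rw [Finset.sum_apply]
  by_cases hn : n < N
  · rw [Finset.sum_eq_single n]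
    · simp [eSeq]
    · intro b _ hb; simp [eSeq, hb.symm]
    · intro h; exact absurd (Finset.mem_range.mpr hn) h
  · rw [hu n (le_of_not_gt hn)]
    apply (Finset.sum_eq_zero _).symm
    intro b hb
    have : n ≠ b := by
      intro h; exact hn (h ▸ Finset.mem_range.mp hb)
    simp [eSeq, this]

/-- A causal linear operator `T` on sequences is time-invariant
(`ΛT = TΛ`) if and only if it acts as convolution with its impulse response
`T(k) = (Tδ₀)(k)` on all finitely supported inputs:
`(Tu)(n) = Σ_{k=0}^{n} (Tδ₀)(k) u(n-k)`. -/
theorem stmt11 (T : (ℕ → ℝ) →ₗ[ℝ] (ℕ → ℝ)) (hT : Causal T) :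
    shiftL ∘ₗ T = T ∘ₗ shiftL ↔
      ∀ u : ℕ → ℝ, (∃ N : ℕ, ∀ n ≥ N, u n = 0) →
        ∀ n : ℕ, T u n = ∑ k ∈ Finset.range (n + 1), T delta0 k * u (n - k) := by
  constructor
  · intro h u ⟨N, hu⟩ n
    have hdec := decomp u N hu
    set f : ℕ → ℝ := fun j => if j ≤ n then T delta0 (n - j) * u j else 0 with hf
    calc T u n = ∑ j ∈ Finset.range N, u j * T (eSeq j) n := by
          conv_lhs => rw [hdec]
          rw [map_sum, Finset.sum_apply]
          simp
      _ = ∑ j ∈ Finset.range N, f j := by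
          apply Finset.sum_congr rfl
          intro j _
          rw [T_eSeq T h, hf]
          by_cases hj : j ≤ n <;> simp [hj, mul_comm]
      _ = ∑ j ∈ Finset.range (max N (n + 1)), f j := by
          apply Finset.sum_subset
          · exact Finset.range_subset_range.mpr (le_max_left _ _)
          · intro j _ hj
            have : N ≤ j := by
              by_contra hc
              exact hj (Finset.mem_range.mpr (lt_of_not_ge hc))
            simp [hf, hu j this]
      _ = ∑ j ∈ Finset.range (n + 1), f j := by
          symm
          apply Finset.sum_subset
          · exact Finset.range_subset_range.mpr (le_max_right _ _)
          · intro j _ hj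
            have : ¬ j ≤ n := by
              intro hc
              exact hj (Finset.mem_range.mpr (Nat.lt_succ_of_le hc))
            simp [hf, this]
      _ = ∑ j ∈ Finset.range (n + 1), T delta0 (n - j) * u j := by
          apply Finset.sum_congr rfl
          intro j hj
          simp [hf, Nat.lt_succ_iff.mp (Finset.mem_range.mp hj)]
      _ = ∑ k ∈ Finset.range (n + 1), T delta0 k * u (n - k) := by
          rw [← Finset.sum_range_reflect]
          apply Finset.sum_congr rfl
          intro j hj
          have hj' := Nat.lt_succ_iff.mp (Finset.mem_range.mp hj)
          have e1 : n + 1 - 1 - j = n - j := by omega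
          have e2 : n - (n - j) = j := by omega
          rw [e1, e2]
  · intro h
    ext u n
    simp only [LinearMap.comp_apply]
    set v : ℕ → ℝ := fun j => if j ≤ n then shiftL u j else 0 with hv
    have h1 : T (shiftL u) n = T v n :=
      hT _ _ n (fun j hj => by simp [hv, hj])
    have h2 : T v n = ∑ k ∈ Finset.range (n + 1), T delta0 k * v (n - k) :=
      h v ⟨n + 1, fun m hm => by simp only [hv]; rw [if_neg]; omega⟩ n
    rw [h1, h2]
    cases n with
    | zero =>
      have : v 0 = 0 := by simp [hv, shiftL]
      simp [shiftL, this]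
    | succ m =>
      show T u m = _
      set w : ℕ → ℝ := fun j => if j ≤ m then u j else 0 with hw
      have h3 : T u m = T w m := hT _ _ m (fun j hj => by simp [hw, hj])
      have h4 : T w m = ∑ k ∈ Finset.range (m + 1), T delta0 k * w (m - k) :=
        h w ⟨m + 1, fun j hj => by simp only [hw]; rw [if_neg]; omega⟩ m
      rw [h3, h4]
      conv_rhs => rw [Finset.sum_range_succ]
      have hv0 : v (m + 1 - (m + 1)) = 0 := by simp [hv, shiftL]
      rw [hv0, mul_zero, add_zero]
      apply Finset.sum_congr rfl
      intro k hk
      have hk' := Nat.lt_succ_iff.mp (Finset.mem_range.mp hk)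
      have e1 : m + 1 - k = (m - k) + 1 := by omega
      have hvk : v (m + 1 - k) = u (m - k) := by
        rw [e1]; simp only [hv]; rw [if_pos (by omega)]; rfl
      rw [hvk]
      have hwk : w (m - k) = u (m - k) := by simp [hw, Nat.sub_le m k |>.trans (le_refl m)]
      rw [hwk]
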